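/- arXiv:2108.08564 — 4 statements merged into one kernel-verified Lean document; each statement's English description precedes it below -/
import Mathlib

section
/- Let I be a nonzero proper homogeneous ideal of R = K[X_1,...,X_s], J the Kodiyalam reduction of I with d(J) = p(I), and r(I) the reduction number of I with respect to J. Then ε(I;n) ≤ min{n, r(I)}·(d(I) − p(I)) for all n ≥ 1, where ε(I;n) = d(I^n) − p(I)n. -/
/-!
Once `I ^ (r + 1) = J * I ^ r`, every `I ^ n` with `n ≥ r` equals `J ^ (n - r) * I ^ r`, and `d` is
subadditive on products of ideals, so `d(I ^ n) ≤ (n - min n r) * p + min n r * d(I)`.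

The work is in showing that the reduction number is attained at all (otherwise `r = sInf ∅ = 0`).
A generator of degree `> p` has some power `f ^ k ∈ M * I ^ k`, hence by pigeonhole on monomials in
the generators `I ^ (N + 1) ≤ J * I ^ N + M * I ^ (N + 1)` for large `N`; since `M` is generated in
positive degree, graded Nakayama drops the second summand.
-/

open MvPolynomial

/-- The maximal generating degree `d(I)` of a homogeneous ideal. -/
noncomputable def maxGenDeg {K : Type*} [Field K] {σ : Type*}
    (I : Ideal (MvPolynomial σ K)) : ℕ :=
  sInf {d | I = Ideal.span {f | f ∈ I ∧ f.totalDegree ≤ d}}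

section MaxGenDeg

variable {K σ : Type*} [Field K]

theorem maxGenDeg_span_le {S : Set (MvPolynomial σ K)} {d : ℕ}
    (hS : ∀ g ∈ S, g.totalDegree ≤ d) : maxGenDeg (Ideal.span S) ≤ d :=
  Nat.sInf_le <| le_antisymm (Ideal.span_mono fun g hg => ⟨Ideal.subset_span hg, hS g hg⟩)
    (Ideal.span_le.mpr fun _ hg => hg.1)

theorem maxGenDeg_top : maxGenDeg (⊤ : Ideal (MvPolynomial σ K)) = 0 := by
  rw [← Ideal.span_singleton_one]
  exact Nat.le_zero.mp <| maxGenDeg_span_le fun g hg => by simp [Set.mem_singleton_iff.mp hg]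

variable [Finite σ]

theorem span_totalDegree_le_maxGenDeg (A : Ideal (MvPolynomial σ K)) :
    Ideal.span {g | g ∈ A ∧ g.totalDegree ≤ maxGenDeg A} = A := by
  obtain ⟨G, hG⟩ := IsNoetherian.noetherian A
  have hne : {d | A = Ideal.span {g | g ∈ A ∧ g.totalDegree ≤ d}}.Nonempty := by
    refine ⟨G.sup totalDegree, le_antisymm ?_ (Ideal.span_le.mpr fun _ hg => hg.1)⟩
    rw [← hG]
    exact Ideal.span_le.mpr fun g hg =>
      Ideal.subset_span ⟨Ideal.subset_span hg, Finset.le_sup hg⟩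
  exact (Nat.sInf_mem hne).symm

open scoped Pointwise in
theorem maxGenDeg_mul_le (A B : Ideal (MvPolynomial σ K)) :
    maxGenDeg (A * B) ≤ maxGenDeg A + maxGenDeg B := by
  calc maxGenDeg (A * B)
      = maxGenDeg (Ideal.span ({g | g ∈ A ∧ g.totalDegree ≤ maxGenDeg A} *
          {g | g ∈ B ∧ g.totalDegree ≤ maxGenDeg B})) := by
        rw [← Ideal.span_mul_span', span_totalDegree_le_maxGenDeg,
          span_totalDegree_le_maxGenDeg]
    _ ≤ maxGenDeg A + maxGenDeg B := by
        refine maxGenDeg_span_le ?_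
        rintro _ ⟨a, ⟨-, ha⟩, b, ⟨-, hb⟩, rfl⟩
        exact (totalDegree_mul a b).trans (add_le_add ha hb)

theorem maxGenDeg_pow_le (A : Ideal (MvPolynomial σ K)) (n : ℕ) :
    maxGenDeg (A ^ n) ≤ n * maxGenDeg A := by
  induction n with
  | zero => simp [maxGenDeg_top]
  | succ n ih =>
    calc maxGenDeg (A ^ (n + 1)) ≤ maxGenDeg (A ^ n) + maxGenDeg A := by
          rw [pow_succ]; exact maxGenDeg_mul_le _ _
      _ ≤ (n + 1) * maxGenDeg A := by rw [add_mul, one_mul]; omega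

end MaxGenDeg

theorem Ideal.IsHomogeneous.pow {ι A τ : Type*} [CommSemiring A] [SetLike τ A]
    [AddSubmonoidClass τ A] [DecidableEq ι] [AddMonoid ι] {𝒜 : ι → τ} [GradedRing 𝒜]
    {I : Ideal A} (hI : I.IsHomogeneous 𝒜) (n : ℕ) : (I ^ n).IsHomogeneous 𝒜 := by
  induction n with
  | zero => rw [pow_zero, Ideal.one_eq_top]; exact Ideal.IsHomogeneous.top 𝒜
  | succ n ih => rw [pow_succ]; exact ih.mul hI

section GradedNakayama

variable {A τ : Type*} [CommSemiring A] [SetLike τ A] [AddSubmonoidClass τ A]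
  {𝒜 : ℕ → τ} [GradedRing 𝒜]

open DirectSum in
theorem Ideal.IsHomogeneous.le_of_le_sup_span_mul {T U : Ideal A} (hU : U.IsHomogeneous 𝒜)
    {S : Set A} (hS : ∀ x ∈ S, ∃ i, 0 < i ∧ x ∈ 𝒜 i) (h : T ≤ U ⊔ Ideal.span S * T) :
    T ≤ U := by
  suffices key : ∀ e, ∀ t ∈ T, (decompose 𝒜 t e : A) ∈ U from
    fun t ht => hU.mem_iff.mpr fun e => key e t ht
  intro e
  induction e using Nat.strong_induction_on with
  | _ e IH =>
  have hmul : ∀ x ∈ Ideal.span S * T, (decompose 𝒜 x e : A) ∈ U := by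
    intro x hx
    refine Submodule.mul_induction_on hx (fun m hm t ht => ?_) fun x y hx hy => by
      rw [decompose_add, DirectSum.add_apply, AddMemClass.coe_add]; exact U.add_mem hx hy
    induction hm using Submodule.span_induction generalizing t with
    | mem s hs =>
      obtain ⟨i, hi, hsi⟩ := hS s hs
      by_cases hie : i ≤ e
      · rw [coe_decompose_mul_of_left_mem_of_le 𝒜 hsi hie]
        exact U.mul_mem_left s (IH (e - i) (by omega) t ht)
      · rw [coe_decompose_mul_of_left_mem_of_not_le 𝒜 hsi hie]
        exact U.zero_mem
    | zero => simp
    | add m m' _ _ hm hm' =>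
      rw [add_mul, decompose_add, DirectSum.add_apply, AddMemClass.coe_add]
      exact U.add_mem (hm t ht) (hm' t ht)
    | smul c m _ hm =>
      rw [smul_eq_mul, mul_assoc, mul_left_comm]
      exact hm (c * t) (T.mul_mem_left c ht)
  intro t ht
  obtain ⟨u, hu, v, hv, rfl⟩ := Submodule.mem_sup.mp (h ht)
  rw [decompose_add, DirectSum.add_apply, AddMemClass.coe_add]
  exact U.add_mem (hU e hu) (hmul v hv)

end GradedNakayama

theorem Ideal.prod_pow_mem_pow_sum {R ι : Type*} [CommSemiring R] {I : Ideal R} {f : ι → R}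
    (hf : ∀ i, f i ∈ I) (d : ι → ℕ) (s : Finset ι) :
    ∏ i ∈ s, f i ^ d i ∈ I ^ ∑ i ∈ s, d i := by
  rw [← Finset.prod_pow_eq_pow_sum]
  exact Ideal.prod_mem_prod fun i _ => Ideal.pow_mem_pow (hf i) (d i)

theorem Ideal.span_range_pow_succ_le_mul_pow {R ι : Type*} [CommSemiring R] [Fintype ι]
    (f : ι → R) (L : Ideal R) {m n : ℕ}
    (hf : ∀ i, f i ^ (m + 1) ∈ L * Ideal.span (Set.range f) ^ m)
    (hn : Fintype.card ι * m ≤ n) :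
    Ideal.span (Set.range f) ^ (n + 1) ≤ L * Ideal.span (Set.range f) ^ n := by
  classical
  set I := Ideal.span (Set.range f)
  have hfI : ∀ i, f i ∈ I := fun i => Ideal.subset_span ⟨i, rfl⟩
  have hmonomial : ∀ d : ι → ℕ, ∑ i, d i = n + 1 → ∏ i, f i ^ d i ∈ L * I ^ n := by
    intro d hd
    obtain ⟨i, hi⟩ : ∃ i, m + 1 ≤ d i := by
      by_contra! hlt
      have : ∑ i, d i ≤ ∑ _i : ι, m := Finset.sum_le_sum fun i _ => Nat.le_of_lt_succ (hlt i)
      simp only [Finset.sum_const, Finset.card_univ, smul_eq_mul] at this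
      omega
    have hrest : f i ^ (d i - (m + 1)) * ∏ j ∈ Finset.univ.erase i, f j ^ d j ∈ I ^ (n - m) := by
      have hsum := Finset.add_sum_erase Finset.univ d (Finset.mem_univ i)
      rw [show n - m = (d i - (m + 1)) + ∑ j ∈ Finset.univ.erase i, d j by omega, pow_add]
      exact Ideal.mul_mem_mul (Ideal.pow_mem_pow (hfI i) _) (Ideal.prod_pow_mem_pow_sum hfI d _)
    have hsplit : ∏ j, f j ^ d j =
        f i ^ (m + 1) * (f i ^ (d i - (m + 1)) * ∏ j ∈ Finset.univ.erase i, f j ^ d j) := by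
      rw [← Finset.mul_prod_erase Finset.univ _ (Finset.mem_univ i), ← mul_assoc, ← pow_add,
        Nat.add_sub_cancel' hi]
    rw [hsplit, show L * I ^ n = L * I ^ m * I ^ (n - m) by
      rw [mul_assoc, ← pow_add, Nat.add_sub_cancel' (by nlinarith [Fintype.card_pos_iff.mpr ⟨i⟩])]]
    exact Ideal.mul_mem_mul (hf i) hrest
  intro y hy
  obtain ⟨P, hP, rfl⟩ := (Ideal.mem_span_pow_iff_exists_isHomogeneous f y).mp hy
  rw [eval_eq']
  refine Ideal.sum_mem _ fun d hd => Ideal.mul_mem_left _ _ (hmonomial d ?_)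
  rw [← Finsupp.degree_eq_sum, Finsupp.degree_eq_weight_one]
  exact hP (mem_support_iff.mp hd)

theorem Ideal.exists_span_range_pow_succ_le_mul_pow {R ι : Type*} [CommSemiring R] [Fintype ι]
    (f : ι → R) (L : Ideal R)
    (hf : ∀ i, ∀ᶠ c in Filter.atTop, f i ^ (c + 1) ∈ L * Ideal.span (Set.range f) ^ c) :
    ∃ N, Ideal.span (Set.range f) ^ (N + 1) ≤ L * Ideal.span (Set.range f) ^ N := by
  obtain ⟨m, hm⟩ := (Filter.eventually_all.mpr hf).exists
  exact ⟨_, Ideal.span_range_pow_succ_le_mul_pow f L hm le_rfl⟩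

theorem Ideal.pow_mem_mul_pow_of_le {R : Type*} [CommSemiring R] {M I : Ideal R} {x : R}
    (hx : x ∈ I) {k c : ℕ} (hk : x ^ k ∈ M * I ^ k) (hkc : k ≤ c) : x ^ c ∈ M * I ^ c := by
  rw [← Nat.add_sub_cancel' hkc, pow_add, pow_add, ← mul_assoc]
  exact Ideal.mul_mem_mul hk (Ideal.pow_mem_pow hx _)

theorem MvPolynomial.exists_pow_succ_eq_span_totalDegree_le_mul_pow {R σ ι : Type*}
    [CommSemiring R] [Fintype ι] (f : ι → MvPolynomial σ R) (deg : ι → ℕ)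
    (hhom : ∀ i, (f i).IsHomogeneous (deg i)) (p : ℕ)
    (hf : ∀ i, p < deg i →
      ∃ k, f i ^ k ∈ Ideal.span (Set.range X) * Ideal.span (Set.range f) ^ k) :
    ∃ N, Ideal.span (Set.range f) ^ (N + 1) =
      Ideal.span {g | g ∈ Ideal.span (Set.range f) ∧ g.totalDegree ≤ p} *
        Ideal.span (Set.range f) ^ N := by
  let := MvPolynomial.gradedAlgebra (σ := σ) (R := R)
  set I := Ideal.span (Set.range f)
  set J := Ideal.span {g | g ∈ I ∧ g.totalDegree ≤ p}
  -- `J₀ ≤ J` is generated by homogeneous elements, so graded Nakayama applies to `J₀ * I ^ N`.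
  set J₀ := Ideal.span (f '' {i | deg i ≤ p})
  set M := Ideal.span (Set.range (X : σ → MvPolynomial σ R))
  have hfI : ∀ i, f i ∈ I := fun i => Ideal.subset_span ⟨i, rfl⟩
  have hJI : J ≤ I := Ideal.span_le.mpr fun _ hg => hg.1
  have hJ₀J : J₀ ≤ J := Ideal.span_le.mpr <| by
    rintro _ ⟨i, hi, rfl⟩
    exact Ideal.subset_span ⟨hfI i, (hhom i).totalDegree_le.trans hi⟩
  have hJ₀ : J₀.IsHomogeneous (homogeneousSubmodule σ R) := Ideal.homogeneous_span _ _ <| by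
    rintro _ ⟨i, -, rfl⟩
    exact ⟨deg i, (mem_homogeneousSubmodule _ _).mpr (hhom i)⟩
  have hI : I.IsHomogeneous (homogeneousSubmodule σ R) := Ideal.homogeneous_span _ _ <| by
    rintro _ ⟨i, rfl⟩
    exact ⟨deg i, (mem_homogeneousSubmodule _ _).mpr (hhom i)⟩
  have hpow : ∀ i, ∀ᶠ c in Filter.atTop, f i ^ (c + 1) ∈ (J₀ ⊔ M * I) * I ^ c := by
    intro i
    by_cases hi : deg i ≤ p
    · refine Filter.Eventually.of_forall fun c => ?_
      rw [pow_succ']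
      exact Ideal.mul_mem_mul (Ideal.mem_sup_left (Ideal.subset_span ⟨i, hi, rfl⟩))
        (Ideal.pow_mem_pow (hfI i) c)
    · obtain ⟨k, hk⟩ := hf i (not_le.mp hi)
      filter_upwards [Filter.eventually_ge_atTop k] with c hc
      have := Ideal.pow_mem_mul_pow_of_le (hfI i) hk (hc.trans c.le_succ)
      rw [pow_succ', ← mul_assoc] at this
      exact Ideal.mul_mono_left le_sup_right this
  obtain ⟨N, hN⟩ := Ideal.exists_span_range_pow_succ_le_mul_pow f _ hpow
  refine ⟨N, le_antisymm ?_ ?_⟩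
  · refine le_trans ?_ (Ideal.mul_mono_left hJ₀J)
    refine (hJ₀.mul (hI.pow N)).le_of_le_sup_span_mul (S := Set.range X) ?_ ?_
    · rintro _ ⟨j, rfl⟩
      exact ⟨1, one_pos, (mem_homogeneousSubmodule _ _).mpr (isHomogeneous_X R j)⟩
    · rwa [Ideal.sup_mul, mul_assoc, ← pow_succ'] at hN
  · rw [pow_succ']
    exact Ideal.mul_mono_left hJI

theorem pow_eq_pow_sub_min_mul_pow_min {M : Type*} [CommMonoid M] {a b : M} {r : ℕ}
    (h : a ^ (r + 1) = b * a ^ r) (n : ℕ) : a ^ n = b ^ (n - min n r) * a ^ min n r := by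
  rcases le_total n r with hnr | hrn
  · simp [min_eq_left hnr]
  obtain ⟨k, rfl⟩ := Nat.exists_eq_add_of_le hrn
  rw [min_eq_right hrn, Nat.add_sub_cancel_left]
  clear hrn
  induction k with
  | zero => simp
  | succ k ih => rw [← add_assoc, pow_succ, ih, mul_assoc, ← pow_succ, h, ← mul_assoc, ← pow_succ]

theorem Nat.sub_mul_add_mul_le {k n p d : ℕ} (hk : k ≤ n) :
    (n - k) * p + k * d ≤ p * n + k * (d - p) := by
  obtain ⟨j, rfl⟩ := Nat.exists_eq_add_of_le hk
  have : d ≤ p + (d - p) := by omega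
  rw [Nat.add_sub_cancel_left]
  nlinarith

theorem degree_excess_upper_bound_general
    {K : Type*} [Field K] (s t : ℕ) (f : Fin t → MvPolynomial (Fin s) K)
    (deg : Fin t → ℕ) (hhom : ∀ i, (f i).IsHomogeneous (deg i))
    (I : Ideal (MvPolynomial (Fin s) K)) (hI : I = Ideal.span (Set.range f))
    (M : Ideal (MvPolynomial (Fin s) K)) (hM : M = Ideal.span (Set.range X))
    (p : ℕ) (hp : p = sSup {d | ∃ i, deg i = d ∧ ∀ n ≥ 1, f i ^ n ∉ M * I ^ n})
    (J : Ideal (MvPolynomial (Fin s) K))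
    (hJ : J = Ideal.span {g | g ∈ I ∧ g.totalDegree ≤ p})
    (r : ℕ) (hr : r = sInf {n | I ^ (n + 1) = J * I ^ n}) :
    ∀ n : ℕ, 1 ≤ n →
      maxGenDeg (I ^ n) ≤ p * n + min n r * (maxGenDeg I - p) := by
  intro n _
  have hhigh : ∀ i, p < deg i → ∃ k, f i ^ k ∈ M * I ^ k := by
    intro i hi
    by_contra! h
    have hfin : {d | ∃ i, deg i = d ∧ ∀ n ≥ 1, f i ^ n ∉ M * I ^ n}.Finite :=
      (Set.finite_range deg).subset fun _ ⟨j, hj, _⟩ => ⟨j, hj⟩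
    exact hi.not_ge <| hp ▸ le_csSup hfin.bddAbove ⟨i, rfl, fun k _ => h k⟩
  subst hI hM hJ
  obtain ⟨N, hN⟩ := exists_pow_succ_eq_span_totalDegree_le_mul_pow f deg hhom p hhigh
  have hred : Ideal.span (Set.range f) ^ (r + 1) = _ := hr ▸ Nat.sInf_mem ⟨N, hN⟩
  calc maxGenDeg (Ideal.span (Set.range f) ^ n)
      ≤ (n - min n r) * p + min n r * maxGenDeg (Ideal.span (Set.range f)) := by
        rw [pow_eq_pow_sub_min_mul_pow_min hred n]
        refine (maxGenDeg_mul_le _ _).trans (add_le_add ?_ (maxGenDeg_pow_le _ _))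
        exact (maxGenDeg_pow_le _ _).trans
          (Nat.mul_le_mul_left _ (maxGenDeg_span_le fun _ hg => hg.2))
    _ ≤ _ := Nat.sub_mul_add_mul_le (min_le_left n r)

/-- `ε(I;n) ≤ min{n, r(I)}·(d(I) − p(I))` for all `n ≥ 1`. -/
theorem degree_excess_upper_bound
    {K : Type*} [Field K] (s t : ℕ) (f : Fin t → MvPolynomial (Fin s) K)
    (deg : Fin t → ℕ) (hhom : ∀ i, (f i).IsHomogeneous (deg i))
    (I : Ideal (MvPolynomial (Fin s) K)) (hI : I = Ideal.span (Set.range f))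
    (hne : I ≠ ⊥) (hpr : I ≠ ⊤)
    (hmin : ∀ i, f i ∉ Ideal.span (f '' {j | j ≠ i}))
    (M : Ideal (MvPolynomial (Fin s) K)) (hM : M = Ideal.span (Set.range X))
    (p : ℕ) (hp : p = sSup {d | ∃ i, deg i = d ∧ ∀ n ≥ 1, f i ^ n ∉ M * I ^ n})
    (J : Ideal (MvPolynomial (Fin s) K))
    (hJ : J = Ideal.span {g | g ∈ I ∧ g.totalDegree ≤ p})
    (hdJ : maxGenDeg J = p)
    (r : ℕ) (hr : r = sInf {n | I ^ (n + 1) = J * I ^ n}) :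
    ∀ n : ℕ, 1 ≤ n →
      maxGenDeg (I ^ n) ≤ p * n + min n r * (maxGenDeg I - p) :=
  degree_excess_upper_bound_general s t f deg hhom I hI M hM p hp J hJ r hr
end

section
/- Let p ≥ 4, 2 ≤ i ≤ ⌊p/2⌋, m_j = X_1^{p−j}X_2^j, and I_p = (m_0, m_p, m_1, m_{p−1}) ⊂ K[X_1,X_2]. Then for all integers u ≤ i−2 and v ≤ p−i−2, the monomial m_i m_0^u m_p^v does not belong to I_p^{1+u+v}. -/
/-!
`I_p^n` is the monomial ideal spanned by the `n`-fold sums of the exponents `(p,0)`, `(0,p)`,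
`(p-1,1)`, `(1,p-1)`, all of degree `p`. The monomial has degree `(1+u+v)p`, so it would have to
be such a sum, say with `c₁` copies of `(p-1,1)` and `c₂` of `(1,p-1)`. Comparing `X₂`-degrees
modulo `p` gives `c₂ - c₁ ≡ -i`, and since `c₁, c₂ ≤ 1+u+v < p - 2` only `c₁ = c₂ + i` or
`c₂ = c₁ + p - i` remain; the first forces `c₁ > u + 1`, the second `c₂ > v + 1`.
-/

open MvPolynomial Pointwise

namespace MvPolynomial

variable {σ R : Type*} [CommSemiring R]

theorem span_monomial_image_pow (S : Set (σ →₀ ℕ)) (n : ℕ) :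
    Ideal.span ((fun s => monomial s (1 : R)) '' S) ^ n =
      Ideal.span ((fun s => monomial s (1 : R)) '' (n • S)) := by
  induction n with
  | zero => simp [Ideal.span_singleton_one]
  | succ n ih =>
    rw [pow_succ', ih, Ideal.span_mul_span', succ_nsmul', ← Set.image2_add, ← Set.image2_mul,
      Set.image2_image_left, Set.image2_image_right, Set.image_image2]
    simp only [monomial_mul, one_mul]

theorem monomial_mem_span_monomial_image_pow_iff [Nontrivial R] {S : Set (σ →₀ ℕ)} {n : ℕ}
    {m : σ →₀ ℕ} :
    monomial m (1 : R) ∈ Ideal.span ((fun s => monomial s (1 : R)) '' S) ^ n ↔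
      ∃ t ∈ n • S, t ≤ m := by
  classical
  simp [span_monomial_image_pow, mem_ideal_span_monomial_image, support_monomial]

end MvPolynomial

noncomputable def bivariateExp (a b : ℕ) : Fin 2 →₀ ℕ := Finsupp.single 0 a + Finsupp.single 1 b

@[simp] lemma bivariateExp_apply_zero (a b : ℕ) : bivariateExp a b 0 = a := by
  simp [bivariateExp]

@[simp] lemma bivariateExp_apply_one (a b : ℕ) : bivariateExp a b 1 = b := by
  simp [bivariateExp]

lemma bivariateExp_add (a b a' b' : ℕ) :
    bivariateExp a b + bivariateExp a' b' = bivariateExp (a + a') (b + b') := by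
  ext j; fin_cases j <;> simp

lemma monomial_bivariateExp {K : Type*} [CommSemiring K] (a b : ℕ) :
    monomial (bivariateExp a b) (1 : K) = X 0 ^ a * X 1 ^ b := by
  simp [bivariateExp, X_pow_eq_monomial, monomial_mul]

def cornerExps (p : ℕ) : Set (Fin 2 →₀ ℕ) :=
  {bivariateExp p 0, bivariateExp 0 p, bivariateExp (p - 1) 1, bivariateExp 1 (p - 1)}

lemma exists_counts_of_mem_nsmul_cornerExps {p n : ℕ} {t : Fin 2 →₀ ℕ}
    (ht : t ∈ n • cornerExps p) :
    ∃ c₀ c₁ c₂ c₃ : ℕ, c₀ + c₁ + c₂ + c₃ = n ∧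
      t = bivariateExp (c₀ * p + c₁ * (p - 1) + c₂) (c₁ + c₂ * (p - 1) + c₃ * p) := by
  induction n generalizing t with
  | zero => exact ⟨0, 0, 0, 0, rfl, by simpa [bivariateExp] using ht⟩
  | succ n ih =>
    obtain ⟨g, hg, t', ht', rfl⟩ := Set.mem_add.mp (succ_nsmul' (cornerExps p) n ▸ ht)
    obtain ⟨c₀, c₁, c₂, c₃, hc, rfl⟩ := ih ht'
    simp only [cornerExps, Set.mem_insert_iff, Set.mem_singleton_iff] at hg
    rcases hg with rfl | rfl | rfl | rfl
    · exact ⟨c₀ + 1, c₁, c₂, c₃, by omega, by rw [bivariateExp_add]; congr 1 <;> ring⟩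
    · exact ⟨c₀, c₁, c₂, c₃ + 1, by omega, by rw [bivariateExp_add]; congr 1 <;> ring⟩
    · exact ⟨c₀, c₁ + 1, c₂, c₃, by omega, by rw [bivariateExp_add]; congr 1 <;> ring⟩
    · exact ⟨c₀, c₁, c₂ + 1, c₃, by omega, by rw [bivariateExp_add]; congr 1 <;> ring⟩

lemma corner_sum_not_le {p i u v c₀ c₁ c₂ c₃ : ℕ} (hu : u + 2 ≤ i) (hv : v + i + 2 ≤ p)
    (hc : c₀ + c₁ + c₂ + c₃ = 1 + u + v)
    (h₀ : c₀ * p + c₁ * (p - 1) + c₂ ≤ p - i + p * u) :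
    ¬ c₁ + c₂ * (p - 1) + c₃ * p ≤ i + p * v := by
  intro h₁
  obtain ⟨q, rfl⟩ : ∃ q, p = q + 1 := ⟨p - 1, by omega⟩
  have hiq : i ≤ q + 1 := by omega
  simp only [Nat.add_sub_cancel] at h₀ h₁
  zify [hiq] at h₀ h₁ hc
  -- Both bounds together add up to `(1 + u + v) * p`, so the second one is an equality.
  have h₁' : (c₁ : ℤ) + c₂ * q + c₃ * (q + 1) = i + (q + 1) * v := by
    linarith [congrArg (· * ((q : ℤ) + 1)) hc]
  have hmod : ((q : ℤ) + 1) * (c₂ + c₃ - v) = i + c₂ - c₁ := by linear_combination h₁'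
  obtain hzero | hone : (c₂ : ℤ) + c₃ - v = 0 ∨ (c₂ : ℤ) + c₃ - v = 1 := by
    have hlow : -1 < (c₂ : ℤ) + c₃ - v := by nlinarith
    have hhigh : (c₂ : ℤ) + c₃ - v < 2 := by nlinarith
    omega
  · rw [hzero] at hmod; omega
  · rw [hone] at hmod; omega

theorem monomial_not_in_power_general
    {K : Type*} [Field K] (p i : ℕ) (hi2 : 2 ≤ i) (hip : i ≤ p / 2)
    (Ip : Ideal (MvPolynomial (Fin 2) K))
    (hIp : Ip = Ideal.span
      {X 0 ^ p, X 1 ^ p, X 0 ^ (p - 1) * X 1, X 0 * X 1 ^ (p - 1)}) :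
    ∀ u v : ℕ, u ≤ i - 2 → v ≤ p - i - 2 →
      (X 0 ^ (p - i) * X 1 ^ i) * (X 0 ^ p) ^ u * ((X 1 : MvPolynomial (Fin 2) K) ^ p) ^ v
        ∉ Ip ^ (1 + u + v) := by
  intro u v hu hv hmem
  have hgens : ({X 0 ^ p, X 1 ^ p, X 0 ^ (p - 1) * X 1, X 0 * X 1 ^ (p - 1)} :
      Set (MvPolynomial (Fin 2) K)) = (fun s => monomial s 1) '' cornerExps p := by
    simp [cornerExps, Set.image_insert_eq, monomial_bivariateExp]
  have hmonomial : (X 0 ^ (p - i) * X 1 ^ i) * (X 0 ^ p) ^ u *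
      ((X 1 : MvPolynomial (Fin 2) K) ^ p) ^ v =
        monomial (bivariateExp (p - i + p * u) (i + p * v)) 1 := by
    rw [monomial_bivariateExp]; ring
  rw [hIp, hgens, hmonomial, monomial_mem_span_monomial_image_pow_iff] at hmem
  obtain ⟨t, ht, hle⟩ := hmem
  obtain ⟨c₀, c₁, c₂, c₃, hc, rfl⟩ := exists_counts_of_mem_nsmul_cornerExps ht
  have h₀ := hle 0
  have h₁ := hle 1
  simp only [bivariateExp_apply_zero, bivariateExp_apply_one] at h₀ h₁
  exact corner_sum_not_le (by omega) (by omega) hc h₀ h₁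

/-- for `p ≥ 4`, `2 ≤ i ≤ ⌊p/2⌋`, `u ≤ i−2` and `v ≤ p−i−2`, the monomial
`m_i m_0^u m_p^v` does not belong to `I_p^{1+u+v}`, where `m_j = X₁^{p−j}X₂^j` and
`I_p = (m_0, m_p, m_1, m_{p−1})`. -/
theorem monomial_not_in_power
    {K : Type*} [Field K] (p i : ℕ) (hp : 4 ≤ p) (hi2 : 2 ≤ i) (hip : i ≤ p / 2)
    (Ip : Ideal (MvPolynomial (Fin 2) K))
    (hIp : Ip = Ideal.span
      {X 0 ^ p, X 1 ^ p, X 0 ^ (p - 1) * X 1, X 0 * X 1 ^ (p - 1)}) :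
    ∀ u v : ℕ, u ≤ i - 2 → v ≤ p - i - 2 →
      (X 0 ^ (p - i) * X 1 ^ i) * (X 0 ^ p) ^ u * ((X 1 : MvPolynomial (Fin 2) K) ^ p) ^ v
        ∉ Ip ^ (1 + u + v) :=
  monomial_not_in_power_general p i hi2 hip Ip hIp
end

section
/- Let p ≥ 4, 2 ≤ i ≤ ⌊p/2⌋, and I_p = (X_1^p, X_2^p, X_1^{p−1}X_2, X_1X_2^{p−1}) ⊂ K[X_1,X_2]. Then (X_1^{p−i}X_2^i)^t ∉ I_p^t for all integers t with 1 ≤ t < (p−1)/i. -/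
/-!
Every generator of `I_p` is a multiple of `X₁^{p-1}` or of `X₂^{p-1}`, and for `t ≥ 1`,
`(A + B)^t ⊆ A^t + B` for ideals, so `I_p^t ⊆ (X₁^{(p-1)t}, X₂^{p-1})`. The monomial
`X₁^{(p-i)t} X₂^{it}` is outside this monomial ideal: its `X₁`-exponent is below `(p-1)t`
since `i ≥ 2`, and its `X₂`-exponent is below `p-1` since `ti < p-1`.
-/

namespace Ideal

theorem sup_pow_le_pow_sup {R : Type*} [CommSemiring R] {I J : Ideal R} {n : ℕ} (hn : n ≠ 0) :
    (I ⊔ J) ^ n ≤ I ^ n ⊔ J := by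
  obtain ⟨k, rfl⟩ := Nat.exists_eq_add_one_of_ne_zero hn
  induction k with
  | zero => simp
  | succ k ih =>
    calc (I ⊔ J) ^ (k + 1 + 1) = (I ⊔ J) ^ (k + 1) * (I ⊔ J) := pow_succ _ _
      _ ≤ (I ^ (k + 1) ⊔ J) * (I ⊔ J) := mul_mono_left (ih k.succ_ne_zero)
      _ = I ^ (k + 1 + 1) ⊔ (I ^ (k + 1) * J ⊔ (J * I ⊔ J * J)) := by
        rw [sup_mul, mul_sup, mul_sup, ← pow_succ, sup_assoc]
      _ ≤ I ^ (k + 1 + 1) ⊔ J :=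
        sup_le_sup_left (sup_le mul_le_right (sup_le mul_le_left mul_le_left)) _

end Ideal

namespace MvPolynomial

variable {σ R : Type*} [CommSemiring R]

theorem X_pow_mul_X_pow_notMem_span_X_pow_pair [Nontrivial R] {j k : σ} (hjk : j ≠ k)
    {a b m n : ℕ} (ha : a < m) (hb : b < n) :
    (X j ^ a * X k ^ b : MvPolynomial σ R) ∉ Ideal.span {X j ^ m, X k ^ n} := by
  have hspan : ({X j ^ m, X k ^ n} : Set (MvPolynomial σ R)) =
      (fun s => monomial s (1 : R)) '' {Finsupp.single j m, Finsupp.single k n} := by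
    simp [Set.image_pair, X_pow_eq_monomial]
  rw [hspan, X_pow_eq_monomial, X_pow_eq_monomial, monomial_mul, one_mul,
    mem_ideal_span_monomial_image]
  intro h
  obtain ⟨s, hs, hle⟩ := h _ <| by
    classical rw [support_monomial, if_neg one_ne_zero]; exact Finset.mem_singleton_self _
  rcases hs with rfl | rfl
  · simpa [hjk, ha.not_ge] using hle j
  · simpa [hjk.symm, hb.not_ge] using hle k

theorem span_le_span_X_pow_pred_pair (j k : σ) (p : ℕ) :
    Ideal.span {X j ^ p, X k ^ p, X j ^ (p - 1) * X k, X j * X k ^ (p - 1)} ≤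
      (Ideal.span {X j ^ (p - 1), X k ^ (p - 1)} : Ideal (MvPolynomial σ R)) := by
  set J : Ideal (MvPolynomial σ R) := Ideal.span {X j ^ (p - 1), X k ^ (p - 1)}
  have hj : X j ^ (p - 1) ∈ J := Ideal.subset_span (by simp)
  have hk : X k ^ (p - 1) ∈ J := Ideal.subset_span (by simp)
  simp only [Ideal.span_le, Set.insert_subset_iff, Set.singleton_subset_iff, SetLike.mem_coe]
  exact ⟨J.mem_of_dvd (pow_dvd_pow _ (p.sub_le 1)) hj, J.mem_of_dvd (pow_dvd_pow _ (p.sub_le 1)) hk,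
    J.mul_mem_right _ hj, J.mul_mem_left _ hk⟩

end MvPolynomial

open MvPolynomial

theorem middle_monomial_power_not_in_power_general
    {K : Type*} [Field K] (p i : ℕ) (hi2 : 2 ≤ i)
    (Ip : Ideal (MvPolynomial (Fin 2) K))
    (hIp : Ip = Ideal.span
      {X 0 ^ p, X 1 ^ p, X 0 ^ (p - 1) * X 1, X 0 * X 1 ^ (p - 1)}) :
    ∀ t : ℕ, 1 ≤ t → t * i < p - 1 →
      ((X 0 : MvPolynomial (Fin 2) K) ^ (p - i) * X 1 ^ i) ^ t ∉ Ip ^ t := by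
  intro t ht hti
  have hle : Ip ^ t ≤ Ideal.span {X 0 ^ ((p - 1) * t), X 1 ^ (p - 1)} :=
    calc Ip ^ t ≤ (Ideal.span {X 0 ^ (p - 1)} ⊔ Ideal.span {X 1 ^ (p - 1)}) ^ t := by
          rw [← Ideal.span_insert, hIp]
          exact Ideal.pow_right_mono (span_le_span_X_pow_pred_pair 0 1 p) t
      _ ≤ Ideal.span {X 0 ^ (p - 1)} ^ t ⊔ Ideal.span {X 1 ^ (p - 1)} :=
          Ideal.sup_pow_le_pow_sup (by omega)
      _ = Ideal.span {X 0 ^ ((p - 1) * t), X 1 ^ (p - 1)} := by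
          rw [Ideal.span_singleton_pow, ← pow_mul, Ideal.span_insert]
  rw [mul_pow, ← pow_mul, ← pow_mul]
  exact fun hmem => X_pow_mul_X_pow_notMem_span_X_pow_pair Fin.zero_ne_one
    (Nat.mul_lt_mul_of_pos_right (by omega) ht) (by rwa [mul_comm]) (hle hmem)

/-- for `p ≥ 4`, `2 ≤ i ≤ ⌊p/2⌋` and `1 ≤ t < (p−1)/i`, the power
`(X₁^{p−i}X₂^i)^t` does not belong to `I_p^t`. -/
theorem middle_monomial_power_not_in_power
    {K : Type*} [Field K] (p i : ℕ) (hp : 4 ≤ p) (hi2 : 2 ≤ i) (hip : i ≤ p / 2)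
    (Ip : Ideal (MvPolynomial (Fin 2) K))
    (hIp : Ip = Ideal.span
      {X 0 ^ p, X 1 ^ p, X 0 ^ (p - 1) * X 1, X 0 * X 1 ^ (p - 1)}) :
    ∀ t : ℕ, 1 ≤ t → t * i < p - 1 →
      ((X 0 : MvPolynomial (Fin 2) K) ^ (p - i) * X 1 ^ i) ^ t ∉ Ip ^ t :=
  middle_monomial_power_not_in_power_general p i hi2 Ip hIp
end

section
/- Let s ≥ 3, δ ≥ s+1, and consider the monomial ideal I = (M_1,...,M_s, M) in K[X_1,...,X_s,Y], where M_i = X^{v_i} with v_i = (δ−1)e_i + e_{i+1} (indices mod s, i.e., v_s = e_1 + (δ−1)e_s) and M = X_1^{δ−s+1}X_2⋯X_s·Y. Let J = (M_1,...,M_s). Then the reduction number r(I) = min{t ≥ 1 : M^t ∈ J^t} − 1 satisfies (δ−1)^{s−2} < r(I) ≤ (δ−1)^s. -/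
/-!
`M ^ t ∈ J ^ t` holds iff some product `∏ M_i ^ a_i` of `t` generators divides `M ^ t`, i.e.
`∑ a_i = t` and `q a_j + a_{j-1} ≤ t c_j` for all `j`, where `q = δ - 1` and `c_j` is the
exponent of `X_j` in `M`. Since `∑ c_j = δ = q + 1`, summing these inequalities shows that they
are all equalities. The deviations `d_j = (q + 1) a_j - t` then solve a circulant system with
determinant `±(1 - (-q) ^ s)` and right-hand side `(q + 1)(δ - s) t e_0`, so
`q ^ s - 1 ≤ δ (δ - s) t`, which forces `t > q ^ (s - 2) + 1`. Conversely the circulant system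
has a nonnegative integral solution with `t = q ^ s - (-1) ^ s ≤ q ^ s + 1`.
-/

open MvPolynomial

section MonomialIdeal

variable {σ ι R : Type*} [CommSemiring R] [Fintype ι]

theorem monomial_sum_smul_eq_prod (v : ι → σ →₀ ℕ) (a : ι → ℕ) :
    monomial (∑ i, a i • v i) (1 : R) = ∏ i, monomial (v i) 1 ^ a i := by
  simp [monomial_sum_index, monomial_pow]

theorem span_range_monomial_pow_le (v : ι → σ →₀ ℕ) (t : ℕ) :
    Ideal.span (Set.range fun i => monomial (v i) (1 : R)) ^ t ≤
      Ideal.span ((fun e => monomial e 1) ''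
        {e | ∃ a : ι → ℕ, ∑ i, a i = t ∧ ∑ i, a i • v i = e}) := by
  classical
  induction t with
  | zero =>
    rw [pow_zero, Ideal.one_eq_top, top_le_iff, Ideal.eq_top_iff_one]
    exact Ideal.subset_span ⟨0, ⟨0, by simp, by simp⟩, by simp⟩
  | succ t ih =>
    rw [pow_succ]
    refine (Ideal.mul_mono_left ih).trans ?_
    rw [Ideal.span_mul_span']
    refine Ideal.span_mono ?_
    rintro _ ⟨_, ⟨e, ⟨a, rfl, rfl⟩, rfl⟩, _, ⟨i, rfl⟩, rfl⟩
    refine ⟨_, ⟨a + Pi.single i 1, ?_, rfl⟩, ?_⟩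
    · simp [Finset.sum_add_distrib]
    · simp [add_smul, Finset.sum_add_distrib, Pi.single_apply, monomial_mul]

theorem monomial_mem_span_range_monomial_pow_iff [Nontrivial R] (v : ι → σ →₀ ℕ)
    (t : ℕ) (m : σ →₀ ℕ) :
    monomial m (1 : R) ∈ Ideal.span (Set.range fun i => monomial (v i) (1 : R)) ^ t ↔
      ∃ a : ι → ℕ, ∑ i, a i = t ∧ ∑ i, a i • v i ≤ m := by
  constructor
  · intro h
    obtain ⟨_, ⟨a, hat, rfl⟩, hle⟩ :=
      mem_ideal_span_monomial_image.mp (span_range_monomial_pow_le v t h) m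
        (by classical simp [support_monomial])
    exact ⟨a, hat, hle⟩
  · rintro ⟨a, rfl, hle⟩
    rw [← tsub_add_cancel_of_le hle, ← one_mul (1 : R), ← monomial_mul, one_mul,
      monomial_sum_smul_eq_prod, ← Finset.prod_pow_eq_pow_sum]
    exact Ideal.mul_mem_left _ _ <| Ideal.prod_mem_prod fun i _ =>
      Ideal.pow_mem_pow (Ideal.subset_span (Set.mem_range_self i)) _

end MonomialIdeal

section CyclicCover

variable {s : ℕ} [NeZero s]

def extraWeight (m : ℕ) (j : Fin s) : ℕ := (if j = 0 then m else 0) + 1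

/-- `a i` is the number of factors `M_i = X_i ^ q X_{i+1}` of a product of `t` such generators
dividing `M ^ t`, where `X_j` occurs in `M` with exponent `extraWeight m j`. -/
def IsCyclicCover (q m t : ℕ) (a : Fin s → ℕ) : Prop :=
  ∑ i, a i = t ∧ ∀ j, q * a j + a (j - 1) ≤ t * extraWeight m j

theorem sum_extraWeight (m : ℕ) : ∑ j : Fin s, extraWeight m j = m + s := by
  simp [extraWeight, Finset.sum_add_distrib]

theorem sum_mul_add_sub_one {R : Type*} [CommSemiring R] (q : R) (a : Fin s → R) :
    ∑ j, (q * a j + a (j - 1)) = (q + 1) * ∑ j, a j := by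
  rw [Finset.sum_add_distrib, ← Finset.mul_sum,
    Fintype.sum_equiv (Equiv.subRight 1) (fun j => a (j - 1)) a fun _ => rfl]
  ring

theorem sum_eq_of_cyclic_eq {q m t : ℕ} {a : Fin s → ℕ} (hm : m + s = q + 1)
    (h : ∀ j, q * a j + a (j - 1) = t * extraWeight m j) : ∑ i, a i = t := by
  have : ∑ j, (q * a j + a (j - 1)) = ∑ j, t * extraWeight m j :=
    Finset.sum_congr rfl fun j _ => h j
  rw [sum_mul_add_sub_one, ← Finset.mul_sum, sum_extraWeight, hm, mul_comm] at this
  exact Nat.eq_of_mul_eq_mul_right q.succ_pos this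

theorem IsCyclicCover.eq {q m t : ℕ} {a : Fin s → ℕ} (h : IsCyclicCover q m t a)
    (hm : m + s = q + 1) (j : Fin s) : q * a j + a (j - 1) = t * extraWeight m j := by
  have hsum : ∑ j : Fin s, (q * a j + a (j - 1)) = ∑ j : Fin s, t * extraWeight m j := by
    rw [sum_mul_add_sub_one, ← Finset.mul_sum, sum_extraWeight, h.1, hm, mul_comm]
  exact (Finset.sum_eq_sum_iff_of_le fun j _ => h.2 j).1 hsum j (Finset.mem_univ j)

open Fin.CommRing in
/-- Up to sign, `1 - (-q) ^ s` is the determinant `q ^ s - (-1) ^ s` of the circulant system. -/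
theorem one_sub_neg_pow_mul_eq {R : Type*} [CommRing R] (q c : R) (d : Fin s → R)
    (h : ∀ j, q * d j + d (j - 1) = if j = 0 then c else 0) :
    (1 - (-q) ^ s) * d (-1) = c := by
  have hchain : ∀ k < s, d 0 = (-q) ^ k * d k := by
    intro k hk
    induction k with
    | zero => simp
    | succ k ih =>
      have hne : ((k + 1 : ℕ) : Fin s) ≠ 0 := by
        rw [Ne, Fin.natCast_eq_zero]
        exact Nat.not_dvd_of_pos_of_lt k.succ_pos hk
      have hk := h (k + 1 : ℕ)
      rw [if_neg hne, Nat.cast_succ, add_sub_cancel_right, ← Nat.cast_succ] at hk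
      rw [ih (by omega), pow_succ]
      linear_combination (-q) ^ k * hk
  have h0 := h 0
  have hlast : ((s - 1 : ℕ) : Fin s) = -1 := by
    rw [Nat.cast_sub NeZero.one_le, Fin.natCast_self, Nat.cast_one, zero_sub]
  rw [if_pos rfl, zero_sub, hchain (s - 1) (by omega), hlast] at h0
  have hs : (-q) ^ s = (-q) ^ (s - 1) * -q := by
    rw [← pow_succ, Nat.sub_add_cancel (NeZero.pos s)]
  linear_combination h0 - d (-1) * hs

theorem IsCyclicCover.pow_le {q m t : ℕ} {a : Fin s → ℕ} (h : IsCyclicCover q m t a)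
    (hm : m + s = q + 1) (hpos : 0 < m * t) : q ^ s ≤ (q + 1) * m * t + 1 := by
  set d : Fin s → ℤ := fun j => (q + 1) * a j - t
  have hd : ∀ j, q * d j + d (j - 1) = if j = 0 then ((q + 1) * m * t : ℤ) else 0 := by
    intro j
    have := congrArg (Nat.cast : ℕ → ℤ) (h.eq hm j)
    push_cast [extraWeight] at this
    split_ifs at this ⊢ <;> linear_combination (q + 1 : ℤ) * this
  have hdet := one_sub_neg_pow_mul_eq (q : ℤ) _ d hd
  have hd0 : d (-1) ≠ 0 := by
    intro h0
    rw [h0, mul_zero] at hdet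
    have : (0 : ℤ) < (q + 1) * m * t := by
      rw [mul_assoc]; exact_mod_cast Nat.mul_pos q.succ_pos hpos
    exact this.ne hdet
  zify
  calc (q : ℤ) ^ s = |(-(q : ℤ)) ^ s| := by rw [abs_pow, abs_neg, Nat.abs_cast]
    _ ≤ |1 - (-(q : ℤ)) ^ s| + 1 := by
      have := abs_sub_abs_le_abs_sub ((-(q : ℤ)) ^ s) 1
      rw [abs_one, abs_sub_comm] at this
      linarith
    _ ≤ |1 - (-(q : ℤ)) ^ s| * |d (-1)| + 1 := by
      gcongr; exact le_mul_of_one_le_right (abs_nonneg _) (Int.one_le_abs hd0)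
    _ = (q + 1) * m * t + 1 := by rw [← abs_mul, hdet, abs_of_nonneg (by positivity)]

end CyclicCover

theorem mul_pow_sub_two_add_one_lt {q m s : ℕ} (hs : 3 ≤ s) (hm : m + s = q + 1) :
    (q + 1) * m * (q ^ (s - 2) + 1) + 1 < q ^ s := by
  obtain ⟨n, rfl⟩ : ∃ n, s = n + 3 := ⟨s - 3, by omega⟩
  have hq : q ≤ q ^ (n + 1) := Nat.le_self_pow n.succ_ne_zero q
  rw [show n + 3 - 2 = n + 1 by omega, show q ^ (n + 3) = q ^ 2 * q ^ (n + 1) by ring]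
  generalize q ^ (n + 1) = P at hq ⊢
  have hmq : (q + 1) * m ≤ (q + 1) * (q - 2) := Nat.mul_le_mul_left _ (by omega)
  zify [show 2 ≤ q by omega] at hmq ⊢
  nlinarith

theorem IsCyclicCover.pow_sub_two_add_one_lt {s : ℕ} [NeZero s] {q m t : ℕ} {a : Fin s → ℕ}
    (h : IsCyclicCover q m t a) (hs : 3 ≤ s) (hm : m + s = q + 1) (hm0 : 0 < m) (ht : 0 < t) :
    q ^ (s - 2) + 1 < t := by
  by_contra! hle
  have := h.pow_le hm (Nat.mul_pos hm0 ht)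
  have := Nat.mul_le_mul_left ((q + 1) * m) hle
  have := mul_pow_sub_two_add_one_lt hs hm
  omega

/-- The constant `N` accounts for the weights `1`, and the alternating part, which all equations
but the `0`-th annihilate, for the extra `m` in the weight of `X_0`. -/
def cyclicSolution {s : ℕ} {R : Type*} [CommRing R] (q m N : R) (j : Fin s) : R :=
  N + (-1) ^ j.val * m * q ^ (s - 1 - j.val)

theorem cyclicSolution_nonneg {s : ℕ} {R : Type*} [CommRing R] [LinearOrder R]
    [IsStrictOrderedRing R] {q m N : R} (hq : 1 ≤ q) (hm : 0 ≤ m) (hN : m * q ^ (s - 2) < N)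
    (j : Fin s) : 0 ≤ cyclicSolution q m N j := by
  have hm2 : 0 ≤ m * q ^ (s - 2) := mul_nonneg hm (pow_nonneg (by linarith) _)
  rcases Nat.even_or_odd j.val with he | ho
  · rw [cyclicSolution, he.neg_one_pow, one_mul]
    linarith [mul_nonneg hm (pow_nonneg (by linarith : (0 : R) ≤ q) (s - 1 - j.val))]
  · have : m * q ^ (s - 1 - j.val) ≤ m * q ^ (s - 2) :=
      mul_le_mul_of_nonneg_left (pow_le_pow_right₀ hq (by have := ho.pos; omega)) hm
    rw [cyclicSolution, ho.neg_one_pow]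
    linarith

section CyclicSolution

variable {s : ℕ} [NeZero s]

theorem val_zero_sub_one : ((0 : Fin s) - 1).val = s - 1 := by
  obtain ⟨n, rfl⟩ := Nat.exists_eq_succ_of_ne_zero (NeZero.ne s)
  simp

theorem cyclicSolution_eq {R : Type*} [CommRing R] (q m N : R)
    (hN : (q + 1) * N = q ^ s - (-1) ^ s) (j : Fin s) :
    q * cyclicSolution q m N j + cyclicSolution q m N (j - 1) =
      (q + 1) * N * ((if j = 0 then m else 0) + 1) := by
  unfold cyclicSolution
  by_cases hj : j = 0
  · subst hj
    obtain ⟨n, rfl⟩ : ∃ n, s = n + 1 := ⟨s - 1, by have := NeZero.ne s; omega⟩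
    rw [val_zero_sub_one, if_pos rfl, Fin.val_zero, Nat.add_sub_cancel, Nat.sub_self,
      Nat.sub_zero, pow_zero, pow_zero]
    linear_combination (-m) * hN
  · obtain ⟨k, hk⟩ : ∃ k, j.val = k + 1 :=
      Nat.exists_eq_succ_of_ne_zero (Fin.val_ne_zero_iff.mpr hj)
    have hks : s - 1 - k = s - 1 - (k + 1) + 1 := by omega
    rw [Fin.val_sub_one_of_ne_zero hj, if_neg hj, hk, Nat.add_sub_cancel, hks, pow_succ,
      pow_succ]
    ring

theorem exists_isCyclicCover {q m : ℕ} (hs : 3 ≤ s) (hm : m + s = q + 1) :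
    ∃ t, 0 < t ∧ t ≤ q ^ s + 1 ∧ ∃ a : Fin s → ℕ, IsCyclicCover q m t a := by
  obtain ⟨N, hN⟩ := sub_dvd_pow_sub_pow (q : ℤ) (-1) s
  rw [sub_neg_eq_add] at hN
  have hkey : ((q + 1) * m * (q ^ (s - 2) + 1) + 1 : ℤ) < q ^ s := by
    exact_mod_cast mul_pow_sub_two_add_one_lt hs hm
  have hsign := neg_one_pow_eq_or ℤ s
  have hNm : (m * q ^ (s - 2) : ℤ) < N := by
    have : ((q + 1) * (m * q ^ (s - 2)) : ℤ) < (q + 1) * N := by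
      rcases hsign with h | h <;> rw [h] at hN <;> nlinarith
    exact lt_of_mul_lt_mul_left this (by positivity)
  have hw := cyclicSolution_nonneg (R := ℤ) (by omega) (by positivity) hNm
  have hN0 : 0 < N := lt_of_le_of_lt (by positivity) hNm
  set t := ((q + 1 : ℤ) * N).toNat
  set a : Fin s → ℕ := fun j => (cyclicSolution (q : ℤ) m N j).toNat
  have ht : (t : ℤ) = (q + 1) * N := Int.toNat_of_nonneg (by positivity)
  have heq : ∀ j, q * a j + a (j - 1) = t * extraWeight m j := by
    intro j
    apply Nat.cast_injective (R := ℤ)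
    push_cast [a, Int.toNat_of_nonneg (hw _), ht, extraWeight]
    exact cyclicSolution_eq _ _ _ hN.symm j
  have htpos : (0 : ℤ) < t := ht ▸ by positivity
  refine ⟨t, by omega, ?_, a, sum_eq_of_cyclic_eq hm heq, fun j => (heq j).le⟩
  zify
  rcases hsign with h | h <;> rw [h] at hN <;> linarith

end CyclicSolution

section CyclicIdeal

variable (s : ℕ)

noncomputable def extraExp (m : ℕ) : Fin (s + 1) →₀ ℕ :=
  Finsupp.single 0 m + ∑ i : Fin s, Finsupp.single i.castSucc 1 + Finsupp.single (Fin.last s) 1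

theorem extra_eq_monomial_extraExp {K : Type*} [CommSemiring K] (m : ℕ) :
    (X 0 ^ m * (∏ i : Fin s, X i.castSucc) * X (Fin.last s) : MvPolynomial (Fin (s + 1)) K) =
      monomial (extraExp s m) 1 := by
  simp only [X, ← monomial_sum_one, monomial_pow, monomial_mul, one_pow, one_mul, extraExp,
    Finsupp.smul_single_one]

variable [NeZero s]

noncomputable def cyclicExp (q : ℕ) (i : Fin s) : Fin (s + 1) →₀ ℕ :=
  Finsupp.single i.castSucc q + Finsupp.single (i + 1).castSucc 1

variable {s}

theorem sum_smul_cyclicExp_apply_castSucc (q : ℕ) (a : Fin s → ℕ) (j : Fin s) :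
    (∑ i, a i • cyclicExp s q i) j.castSucc = q * a j + a (j - 1) := by
  classical
  simp [cyclicExp, Finsupp.single_apply, Finset.sum_add_distrib, ← eq_sub_iff_add_eq, mul_comm]

theorem sum_smul_cyclicExp_apply_last (q : ℕ) (a : Fin s → ℕ) :
    (∑ i, a i • cyclicExp s q i) (Fin.last s) = 0 := by
  simp [cyclicExp, Finsupp.finsetSum_apply, (Fin.castSucc_lt_last _).ne]

theorem extraExp_apply_castSucc (m : ℕ) (j : Fin s) :
    extraExp s m j.castSucc = extraWeight m j := by
  classical
  simp [extraExp, extraWeight, Finsupp.single_apply, eq_comm (a := (0 : Fin (s + 1))),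
    Fin.castSucc_eq_zero_iff]

theorem extraExp_apply_last (m : ℕ) : extraExp s m (Fin.last s) = 1 := by
  simp [extraExp, (Fin.castSucc_lt_last _).ne, NeZero.ne s]

theorem sum_smul_cyclicExp_le_iff (q m t : ℕ) (a : Fin s → ℕ) :
    ∑ i, a i • cyclicExp s q i ≤ t • extraExp s m ↔
      ∀ j, q * a j + a (j - 1) ≤ t * extraWeight m j := by
  simp only [Finsupp.le_def, Fin.forall_fin_succ', Finsupp.smul_apply, smul_eq_mul,
    sum_smul_cyclicExp_apply_castSucc, sum_smul_cyclicExp_apply_last, extraExp_apply_castSucc,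
    extraExp_apply_last, zero_le, and_true]

theorem X_pow_mul_X_eq_monomial_cyclicExp {K : Type*} [CommSemiring K] (q : ℕ) (i : Fin s) :
    (X i.castSucc ^ q * X (i + 1).castSucc : MvPolynomial (Fin (s + 1)) K) =
      monomial (cyclicExp s q i) 1 := by
  rw [X_pow_eq_monomial, X, monomial_mul, one_mul, cyclicExp]

theorem extra_pow_mem_span_pow_iff {K : Type*} [CommSemiring K] [Nontrivial K] (q m t : ℕ) :
    (X 0 ^ m * (∏ i : Fin s, X i.castSucc) * X (Fin.last s) : MvPolynomial (Fin (s + 1)) K) ^ t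
      ∈ Ideal.span (Set.range fun i : Fin s => X i.castSucc ^ q * X (i + 1).castSucc) ^ t ↔
      ∃ a : Fin s → ℕ, IsCyclicCover q m t a := by
  simp_rw [X_pow_mul_X_eq_monomial_cyclicExp, extra_eq_monomial_extraExp, monomial_pow, one_pow,
    monomial_mem_span_range_monomial_pow_iff, sum_smul_cyclicExp_le_iff, IsCyclicCover]

end CyclicIdeal

theorem reduction_number_exponential_bounds_general
    {K : Type*} [Field K] (s : ℕ) [NeZero s] (hs : 3 ≤ s) (δ : ℕ) (hδ : s + 1 ≤ δ)
    (Mgen : Fin s → MvPolynomial (Fin (s + 1)) K)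
    (hMgen : Mgen = fun i =>
      X (Fin.castSucc i) ^ (δ - 1) * X (Fin.castSucc (i + 1)))
    (M : MvPolynomial (Fin (s + 1)) K)
    (hM : M = X (0 : Fin (s + 1)) ^ (δ - s) * (∏ i : Fin s, X (Fin.castSucc i)) *
      X (Fin.last s))
    (J : Ideal (MvPolynomial (Fin (s + 1)) K))
    (hJ : J = Ideal.span (Set.range Mgen))
    (r : ℕ) (hr : r = sInf {t | 1 ≤ t ∧ M ^ t ∈ J ^ t} - 1) :
    (δ - 1) ^ (s - 2) < r ∧ r ≤ (δ - 1) ^ s := by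
  subst hMgen hM hJ hr
  simp_rw [extra_pow_mem_span_pow_iff]
  have hm : δ - s + s = δ - 1 + 1 := by omega
  set S := {t | 1 ≤ t ∧ ∃ a : Fin s → ℕ, IsCyclicCover (δ - 1) (δ - s) t a}
  obtain ⟨t₀, ht₀, ht₀_le, a₀, ha₀⟩ := exists_isCyclicCover hs hm
  have ht₀S : t₀ ∈ S := ⟨ht₀, a₀, ha₀⟩
  have hmin := Nat.sInf_le ht₀S
  obtain ⟨hpos, a, ha⟩ := Nat.sInf_mem ⟨t₀, ht₀S⟩
  have hlow := ha.pow_sub_two_add_one_lt hs hm (by omega) hpos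
  omega

/-- for `s ≥ 3`, `δ ≥ s+1`, `I = (M_1,...,M_s, M)` in `K[X_1,...,X_s,Y]`
with `M_i = X_i^{δ−1}X_{i+1}` (cyclically) and `M = X_1^{δ−s+1}X_2⋯X_s·Y`, the reduction
number `r(I) = min{t ≥ 1 : M^t ∈ J^t} − 1` with `J = (M_1,...,M_s)` satisfies
`(δ−1)^{s−2} < r(I) ≤ (δ−1)^s`. -/
theorem reduction_number_exponential_bounds
    {K : Type*} [Field K] (s : ℕ) [NeZero s] (hs : 3 ≤ s) (δ : ℕ) (hδ : s + 1 ≤ δ)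
    (Mgen : Fin s → MvPolynomial (Fin (s + 1)) K)
    (hMgen : Mgen = fun i =>
      X (Fin.castSucc i) ^ (δ - 1) * X (Fin.castSucc (i + 1)))
    (M : MvPolynomial (Fin (s + 1)) K)
    (hM : M = X (0 : Fin (s + 1)) ^ (δ - s) * (∏ i : Fin s, X (Fin.castSucc i)) *
      X (Fin.last s))
    (J I : Ideal (MvPolynomial (Fin (s + 1)) K))
    (hJ : J = Ideal.span (Set.range Mgen))
    (hI : I = J ⊔ Ideal.span {M})
    (r : ℕ) (hr : r = sInf {t | 1 ≤ t ∧ M ^ t ∈ J ^ t} - 1) :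
    (δ - 1) ^ (s - 2) < r ∧ r ≤ (δ - 1) ^ s :=
  reduction_number_exponential_bounds_general s hs δ hδ Mgen hMgen M hM J hJ r hr
end
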